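/- Let μ ∈ ℝ with μ ≠ 14. The characteristic polynomial of the Jacobian matrix Df_μ(A₁(μ)) at A₁(μ) = ((μ+12)/(μ−14), 1, 1) factors as (X − 10(μ+38)/(14−μ))·(X − 4(5μ+281)/(μ−14))·(X + 26(μ+12)/(μ−14)), and the characteristic polynomial of Df_μ(A₄(μ)) at A₄(μ) = ((8+μ)/(μ−14), 1, 0) factors as (X − 4(4μ+241)/(14−μ))·(X − 2(7μ+122)/(14−μ))·(X + 22(μ+8)/(μ−14)). In particular the eigenvalues of Df_μ(A₁(μ)) are 10(μ+38)/(14−μ), 4(5μ+281)/(μ−14), −26(μ+12)/(μ−14), and those of Df_μ(A₄(μ)) are 4(4μ+241)/(14−μ), 2(7μ+122)/(14−μ), −22(μ+8)/(μ−14). -/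

import Mathlib

/-- The polymatrix replicator vector field `f_μ` on `ℝ³`, as a map `(Fin 3 → ℝ) → (Fin 3 → ℝ)`. -/
noncomputable def F (μ : ℝ) (p : Fin 3 → ℝ) : Fin 3 → ℝ :=
  ![p 0 * (1 - p 0) * (12 - μ + (μ - 14) * p 0 - 20 * p 1 - 4 * p 2),
    p 1 * (1 - p 1) * (-10 + 20 * p 0 + 4 * p 1 - 4 * p 2),
    p 2 * (1 - p 2) * (27 - 54 * p 0 + 11 * p 1 - 4 * p 2)]

/-- The Jacobian matrix `Df_μ(p)` of `f_μ` at `p`: its `(i,j)` entry is the partial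
derivative of the `i`-th component of `f_μ` in the `j`-th coordinate direction. -/
noncomputable def jacobian (μ : ℝ) (p : Fin 3 → ℝ) : Matrix (Fin 3) (Fin 3) ℝ :=
  Matrix.of fun i j => fderiv ℝ (fun q : Fin 3 → ℝ => F μ q i) p (Pi.single j 1)

open ContinuousLinearMap in
lemma entry_lemma (a b c d : ℝ) (i j : Fin 3) (p : Fin 3 → ℝ) :
    fderiv ℝ (fun q : Fin 3 → ℝ => q i * (1 - q i) * (a + b * q 0 + c * q 1 + d * q 2)) p
      (Pi.single j 1) =
    (1 - 2 * p i) * (a + b * p 0 + c * p 1 + d * p 2) * (if j = i then 1 else 0)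
      + p i * (1 - p i) *
        (b * (if j = 0 then (1:ℝ) else 0) + c * (if j = 1 then 1 else 0)
          + d * (if j = 2 then 1 else 0)) := by
  have hi : HasFDerivAt (fun q : Fin 3 → ℝ => q i) (proj i : (Fin 3 → ℝ) →L[ℝ] ℝ) p :=
    (proj i : (Fin 3 → ℝ) →L[ℝ] ℝ).hasFDerivAt
  have h1 := hi.mul ((hasFDerivAt_const (1:ℝ) p).sub hi)
  have h2 : HasFDerivAt (fun q : Fin 3 → ℝ => a + b * q 0 + c * q 1 + d * q 2)
      (b • (proj 0 : (Fin 3 → ℝ) →L[ℝ] ℝ) + c • proj 1 + d • proj 2) p := by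
    have := (((hasFDerivAt_const a p).add ((hasFDerivAt_const b p).mul (proj (0:Fin 3) :
      (Fin 3 → ℝ) →L[ℝ] ℝ).hasFDerivAt)).add ((hasFDerivAt_const c p).mul (proj (1:Fin 3) :
      (Fin 3 → ℝ) →L[ℝ] ℝ).hasFDerivAt)).add ((hasFDerivAt_const d p).mul (proj (2:Fin 3) :
      (Fin 3 → ℝ) →L[ℝ] ℝ).hasFDerivAt)
    refine this.congr_fderiv ?_
    ext v
    simp [mul_comm]
  have h : fderiv ℝ (fun q : Fin 3 → ℝ => q i * (1 - q i) * (a + b * q 0 + c * q 1 + d * q 2)) p = _ :=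
    (h1.mul h2).fderiv
  rw [h]
  simp [Pi.single_apply, proj]
  fin_cases i <;> fin_cases j <;> norm_num [Fin.ext_iff] <;> ring

noncomputable def av (μ : ℝ) : Fin 3 → ℝ := ![12 - μ, -10, 27]
noncomputable def bv (μ : ℝ) : Fin 3 → ℝ := ![μ - 14, 20, -54]
noncomputable def cv : Fin 3 → ℝ := ![-20, 4, 11]
noncomputable def dv : Fin 3 → ℝ := ![-4, -4, -4]

lemma jacobian_apply (μ : ℝ) (p : Fin 3 → ℝ) (i j : Fin 3) :
    jacobian μ p i j =
    (1 - 2 * p i) * (av μ i + bv μ i * p 0 + cv i * p 1 + dv i * p 2) * (if j = i then 1 else 0)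
      + p i * (1 - p i) *
        (bv μ i * (if j = 0 then (1:ℝ) else 0) + cv i * (if j = 1 then 1 else 0)
          + dv i * (if j = 2 then 1 else 0)) := by
  have key : ∀ i : Fin 3, (fun q : Fin 3 → ℝ => F μ q i) =
      (fun q : Fin 3 → ℝ => q i * (1 - q i) *
        (av μ i + bv μ i * q 0 + cv i * q 1 + dv i * q 2)) := by
    intro i
    funext q
    fin_cases i <;> simp [F, av, bv, cv, dv] <;> tauto
  rw [jacobian, Matrix.of_apply, key i, entry_lemma]

open Polynomial in
lemma charpoly_upper (d0 a b d1 d2 : ℝ) :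
    (Matrix.of ![![d0, a, b], ![0, d1, 0], ![0, 0, d2]]).charpoly =
      (X - C d0) * (X - C d1) * (X - C d2) := by
  rw [Matrix.charpoly, Matrix.det_fin_three]
  simp only [Matrix.charmatrix_apply, Matrix.of_apply, Matrix.cons_val_zero,
    Matrix.cons_val_one, Matrix.head_cons, Matrix.cons_val_two, Matrix.tail_cons,
    Matrix.head_fin_const, Matrix.diagonal_apply, Matrix.scalar_apply, Matrix.map_apply,
    Matrix.one_apply, if_true, if_false, Fin.isValue]
  norm_num [Fin.ext_iff]

open Polynomial in
/-- factorization of the characteristic polynomials of the Jacobian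
matrices at the edge equilibria `A₁(μ) = ((μ+12)/(μ−14), 1, 1)` and
`A₄(μ) = ((8+μ)/(μ−14), 1, 0)`, exhibiting their eigenvalues. -/
theorem charpoly_A1_A4 (μ : ℝ) (hμ : μ ≠ 14) :
    (jacobian μ ![(μ + 12) / (μ - 14), 1, 1]).charpoly =
      (X - C (10 * (μ + 38) / (14 - μ))) * (X - C (4 * (5 * μ + 281) / (μ - 14))) *
        (X + C (26 * (μ + 12) / (μ - 14))) ∧
    (jacobian μ ![(8 + μ) / (μ - 14), 1, 0]).charpoly =
      (X - C (4 * (4 * μ + 241) / (14 - μ))) * (X - C (2 * (7 * μ + 122) / (14 - μ))) *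
        (X + C (22 * (μ + 8) / (μ - 14))) := by
  have hne : μ - 14 ≠ 0 := sub_ne_zero.mpr hμ
  have hne' : (14:ℝ) - μ ≠ 0 := fun h => hne (by linarith [sub_eq_zero.mp h])
  constructor
  · have hm : jacobian μ ![(μ + 12) / (μ - 14), 1, 1] =
        Matrix.of ![![-(26 * (μ + 12) / (μ - 14)), (μ + 12) / (μ - 14) * (-26 / (μ - 14)) * (-20),
            (μ + 12) / (μ - 14) * (-26 / (μ - 14)) * (-4)],
          ![0, 10 * (μ + 38) / (14 - μ), 0],
          ![0, 0, 4 * (5 * μ + 281) / (μ - 14)]] := by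
      ext i j
      rw [jacobian_apply]
      fin_cases i <;> fin_cases j <;>
        simp [av, bv, cv, dv, Matrix.vecHead, Matrix.vecTail] <;> (try field_simp) <;>
          (try ring) <;> tauto
    rw [hm, charpoly_upper]
    simp only [map_neg, sub_neg_eq_add]
    ring
  · have hm : jacobian μ ![(8 + μ) / (μ - 14), 1, 0] =
        Matrix.of ![![-(22 * (μ + 8) / (μ - 14)), (8 + μ) / (μ - 14) * (-22 / (μ - 14)) * (-20),
            (8 + μ) / (μ - 14) * (-22 / (μ - 14)) * (-4)],
          ![0, 2 * (7 * μ + 122) / (14 - μ), 0],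
          ![0, 0, 4 * (4 * μ + 241) / (14 - μ)]] := by
      ext i j
      rw [jacobian_apply]
      fin_cases i <;> fin_cases j <;>
        simp [av, bv, cv, dv, Matrix.vecHead, Matrix.vecTail] <;> (try field_simp) <;>
          (try ring) <;> tauto
    rw [hm, charpoly_upper]
    simp only [map_neg, sub_neg_eq_add]
    ring
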